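/- arXiv:math/0309092 — 5 statements merged into one kernel-verified Lean document; each statement's English description precedes it below -/
import Mathlib

section
/- Every d-spiked n-dicycle D is isomorphic to its own line digraph: D ≅ L(D). -/
/-- The `d`-spiked `n`-dicycle: vertices are `Fin n ⊕ (Fin n × Fin d)`, where
`inl i` are the cycle vertices and `inr (i, j)` is the `j`-th spike attached to
cycle vertex `i`.  Arcs: `inl i → inl (i+1)` and `inl i → inr (i, j)`. -/
def spikedDicycle (n d : ℕ) [NeZero n] :
    (Fin n ⊕ (Fin n × Fin d)) → (Fin n ⊕ (Fin n × Fin d)) → Prop :=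
  fun a b =>
    (∃ i : Fin n, a = Sum.inl i ∧ b = Sum.inl (i + 1)) ∨
    (∃ (i : Fin n) (j : Fin d), a = Sum.inl i ∧ b = Sum.inr (i, j))

/-- Every `d`-spiked `n`-dicycle is isomorphic to its own line digraph. -/
theorem spikedDicycle_iso_lineDigraph (n d : ℕ) [NeZero n] :
    ∃ e : (Fin n ⊕ (Fin n × Fin d)) ≃
        {a : (Fin n ⊕ (Fin n × Fin d)) × (Fin n ⊕ (Fin n × Fin d)) //
          spikedDicycle n d a.1 a.2},
      ∀ u v, spikedDicycle n d u v ↔ (e u).val.2 = (e v).val.1 := by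
  refine ⟨{
    toFun := fun u =>
      match u with
      | Sum.inl i => ⟨(Sum.inl (i - 1), Sum.inl i),
          Or.inl ⟨i - 1, rfl, by rw [sub_add_cancel]⟩⟩
      | Sum.inr (i, j) => ⟨(Sum.inl i, Sum.inr (i, j)), Or.inr ⟨i, j, rfl, rfl⟩⟩
    invFun := fun a => a.val.2
    left_inv := fun u => by cases u with
      | inl i => rfl
      | inr p => rfl
    right_inv := fun a => by
      apply Subtype.ext
      obtain ⟨⟨x, y⟩, h⟩ := a
      rcases h with ⟨i, hx, hy⟩ | ⟨i, j, hx, hy⟩ <;>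
        simp only at hx hy <;> subst hx <;> subst hy
      · show (Sum.inl (i + 1 - 1), (Sum.inl (i + 1) : Fin n ⊕ (Fin n × Fin d))) = _
        rw [add_sub_cancel_right]
      · rfl }, ?_⟩
  intro u v
  cases u with
  | inl i =>
    cases v with
    | inl k =>
      simp only [Equiv.coe_fn_mk, Sum.inl.injEq]
      constructor
      · rintro (⟨i', hi, hk⟩ | ⟨_, _, _, h⟩)
        · simp only [Sum.inl.injEq] at hi hk
          subst hi; subst hk
          rw [add_sub_cancel_right]
        · simp at h
      · intro h
        exact Or.inl ⟨i, rfl, by rw [h, sub_add_cancel]⟩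
    | inr p =>
      obtain ⟨k, j⟩ := p
      simp only [Equiv.coe_fn_mk, Sum.inl.injEq]
      constructor
      · rintro (⟨_, _, h⟩ | ⟨i', j', hi, hk⟩)
        · simp at h
        · simp only [Sum.inl.injEq, Sum.inr.injEq, Prod.mk.injEq] at hi hk
          subst hi
          exact hk.1.symm
      · intro h
        subst h
        exact Or.inr ⟨i, j, rfl, rfl⟩
  | inr p =>
    obtain ⟨i, j⟩ := p
    simp only [Equiv.coe_fn_mk]
    constructor
    · rintro (⟨_, h, _⟩ | ⟨_, _, h, _⟩) <;> simp at h
    · intro h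
      cases v with
      | inl k => simp at h
      | inr q => simp at h
end

section
/- Let {H_1, ..., H_k} be a decomposition of a digraph D (a partition of the arc set of D into subdigraphs). Then {L(Υ_D(H_1)), ..., L(Υ_D(H_k))} is a decomposition of a digraph isomorphic to L(D), where Υ_D(H) denotes the growth of D derived by H. -/
open scoped Classical


/-- The growth `Υ_D(H)` of a digraph `D` derived by a subdigraph `H`: keep the
arcs of `H` on the original vertices, and for each arc of `D` not in `H` add one
new pendant out-neighbor attached at its tail. -/
def growth {V : Type*} (D H : V → V → Prop) :
    (V ⊕ {a : V × V // D a.1 a.2 ∧ ¬ H a.1 a.2}) →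
    (V ⊕ {a : V × V // D a.1 a.2 ∧ ¬ H a.1 a.2}) → Prop :=
  fun a b =>
    (∃ u v : V, a = Sum.inl u ∧ b = Sum.inl v ∧ H u v) ∨
    (∃ (u : V) (p : {a : V × V // D a.1 a.2 ∧ ¬ H a.1 a.2}),
      a = Sum.inl u ∧ b = Sum.inr p ∧ p.val.1 = u)

section Aux

variable {V : Type*} {D Hi : V → V → Prop}

lemma growth_inl_inl {u v : V} (h : growth D Hi (Sum.inl u) (Sum.inl v)) : Hi u v := by
  rcases h with ⟨u', v', hu, hv, h⟩ | ⟨u', p, hu, hv, _⟩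
  · cases Sum.inl_injective hu; cases Sum.inl_injective hv; exact h
  · exact absurd hv (by simp)

lemma growth_inl_inr {u : V} {p : {a : V × V // D a.1 a.2 ∧ ¬ Hi a.1 a.2}}
    (h : growth D Hi (Sum.inl u) (Sum.inr p)) : p.val.1 = u := by
  rcases h with ⟨u', v', hu, hv, _⟩ | ⟨u', p', hu, hv, hp⟩
  · exact absurd hv (by simp)
  · cases Sum.inl_injective hu
    cases Sum.inr_injective hv
    exact hp

lemma growth_not_inr {q : {a : V × V // D a.1 a.2 ∧ ¬ Hi a.1 a.2}}
    {b : V ⊕ {a : V × V // D a.1 a.2 ∧ ¬ Hi a.1 a.2}} :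
    ¬ growth D Hi (Sum.inr q) b := by
  rintro (⟨u, v, hu, _, _⟩ | ⟨u, p, hu, _, _⟩) <;> exact absurd hu (by simp)

variable (hsub : ∀ u v : V, Hi u v → D u v)

/-- Arcs of the growth correspond bijectively to arcs of `D`. -/
noncomputable def growthArcEquiv :
    {a : (V ⊕ {a : V × V // D a.1 a.2 ∧ ¬ Hi a.1 a.2}) ×
         (V ⊕ {a : V × V // D a.1 a.2 ∧ ¬ Hi a.1 a.2}) // growth D Hi a.1 a.2} ≃
    {a : V × V // D a.1 a.2} where
  toFun x :=
    match x with
    | ⟨(Sum.inl u, Sum.inl v), h⟩ => ⟨(u, v), hsub u v (growth_inl_inl h)⟩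
    | ⟨(Sum.inl _, Sum.inr p), _⟩ => ⟨p.val, p.prop.1⟩
    | ⟨(Sum.inr q, _), h⟩ => absurd h growth_not_inr
  invFun a :=
    if h : Hi a.val.1 a.val.2 then
      ⟨(Sum.inl a.val.1, Sum.inl a.val.2), Or.inl ⟨a.val.1, a.val.2, rfl, rfl, h⟩⟩
    else
      ⟨(Sum.inl a.val.1, Sum.inr ⟨a.val, a.prop, h⟩),
        Or.inr ⟨a.val.1, ⟨a.val, a.prop, h⟩, rfl, rfl, rfl⟩⟩
  left_inv := by
    rintro ⟨⟨a, b⟩, h⟩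
    match a, b, h with
    | Sum.inl u, Sum.inl v, h =>
        simp only [dif_pos (growth_inl_inl h)]
    | Sum.inl u, Sum.inr p, h =>
        obtain ⟨⟨pu, pv⟩, hp⟩ := p
        have h1 : pu = u := growth_inl_inr h
        subst h1
        simp only [dif_neg hp.2]
    | Sum.inr q, b, h => exact absurd h growth_not_inr
  right_inv := by
    rintro ⟨⟨u, v⟩, hD⟩
    by_cases h : Hi u v
    · simp only [dif_pos h]
    · simp only [dif_neg h]

lemma growthArcEquiv_fst {x} : ∃ u : V, x.val.1 = Sum.inl u ∧
    ((growthArcEquiv hsub) x).val.1 = u := by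
  match x with
  | ⟨(Sum.inl u, Sum.inl v), h⟩ => exact ⟨u, rfl, rfl⟩
  | ⟨(Sum.inl u, Sum.inr p), h⟩ => exact ⟨u, rfl, growth_inl_inr h⟩
  | ⟨(Sum.inr q, _), h⟩ => exact absurd h growth_not_inr

end Aux

/-- Hasunuma–Shibata: if `{H 1, …, H k}` is a decomposition of a digraph `D`, then
`{L(Υ_D(H 1)), …, L(Υ_D(H k))}` is a decomposition of a digraph isomorphic to
`L(D)`. -/
theorem lineDigraph_decomposition_of_growths
    {V : Type*} [Fintype V] (D : V → V → Prop) (k : ℕ)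
    (H : Fin k → (V → V → Prop))
    (hsub : ∀ i, ∀ u v : V, H i u v → D u v)
    (hpart : ∀ u v : V, D u v ↔ ∃ i, H i u v)
    (hdisj : ∀ i j : Fin k, i ≠ j → ∀ u v : V, ¬ (H i u v ∧ H j u v)) :
    ∃ K : Fin k →
        ({a : V × V // D a.1 a.2} → {a : V × V // D a.1 a.2} → Prop),
      -- the `K i` are subdigraphs of `L(D)` whose arc sets partition `A(L(D))`
      (∀ i, ∀ p q : {a : V × V // D a.1 a.2}, K i p q → p.val.2 = q.val.1) ∧
      (∀ p q : {a : V × V // D a.1 a.2}, p.val.2 = q.val.1 ↔ ∃ i, K i p q) ∧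
      (∀ i j : Fin k, i ≠ j → ∀ p q, ¬ (K i p q ∧ K j p q)) ∧
      -- and each `K i` (as a digraph on the vertices of `L(D)`) is isomorphic to
      -- the line digraph of the growth `Υ_D(H i)`
      (∀ i : Fin k,
        ∃ e : {a : _ × _ // growth D (H i) a.1 a.2} ≃ {a : V × V // D a.1 a.2},
          ∀ p q : {a : _ × _ // growth D (H i) a.1 a.2},
            p.val.2 = q.val.1 ↔ K i (e p) (e q)) := by
  refine ⟨fun i p q => p.val.2 = q.val.1 ∧ H i p.val.1 p.val.2, ?_, ?_, ?_, ?_⟩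
  · exact fun i p q h => h.1
  · intro p q
    constructor
    · intro h
      obtain ⟨i, hi⟩ := (hpart p.val.1 p.val.2).1 p.prop
      exact ⟨i, h, hi⟩
    · rintro ⟨i, h, _⟩; exact h
  · rintro i j hij p q ⟨⟨_, h1⟩, ⟨_, h2⟩⟩
    exact hdisj i j hij _ _ ⟨h1, h2⟩
  · intro i
    refine ⟨growthArcEquiv (hsub i), ?_⟩
    rintro p q
    obtain ⟨u, hq1, hq2⟩ := growthArcEquiv_fst (hsub i) (x := q)
    match p with
    | ⟨(Sum.inl a, Sum.inl b), h⟩ =>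
        have hH := growth_inl_inl h
        constructor
        · intro hpq
          simp only [hq1] at hpq
          refine ⟨?_, ?_⟩
          · show b = _
            rw [hq2, Sum.inl_injective hpq]
          · exact hH
        · rintro ⟨h1, _⟩
          have : b = u := by rw [← hq2]; exact h1
          simp [hq1, this]
    | ⟨(Sum.inl a, Sum.inr p'), h⟩ =>
        constructor
        · intro hpq
          rw [hq1] at hpq; exact absurd hpq (by simp)
        · rintro ⟨_, hH⟩
          exact absurd hH p'.prop.2
    | ⟨(Sum.inr _, _), h⟩ => exact absurd h growth_not_inr
end

section
/- Let D be a d-regular digraph on n vertices with dicycle factorization {H_1, ..., H_d}. Then there is a labeling of the vertices of the line digraph L(D) such that its adjacency matrix satisfies M(L(D)) = (J_d ⊗ I_n) · (M(H_1) ⊕ M(H_2) ⊕ ... ⊕ M(H_d)), where J_d is the d×d all-ones matrix, I_n the n×n identity, ⊗ the Kronecker product, and ⊕ the direct (block-diagonal) sum. -/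
open Kronecker

/-- Main theorem: if `D` is a `d`-regular digraph on `n` vertices with dicycle
factorization `{H 1, …, H d}`, there is a labeling of the vertices of the line
digraph `L(D)` (a bijection with `Fin d × Fin n`) under which
`M(L(D)) = (J_d ⊗ I_n) * (M(H 1) ⊕ ⋯ ⊕ M(H d))`. -/
theorem lineDigraph_adjacency_eq_kronecker_mul_directSum
    {V : Type*} [Fintype V] [DecidableEq V] (D : V → V → Prop) [DecidableRel D]
    (n d : ℕ) (hcard : Fintype.card V = n)
    (hout : ∀ v : V, (Finset.univ.filter fun w => D v w).card = d)
    (hin : ∀ v : V, (Finset.univ.filter fun w => D w v).card = d)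
    (H : Fin d → (V → V → Prop)) [∀ i, DecidableRel (H i)]
    (hpart : ∀ u v : V, D u v ↔ ∃ i, H i u v)
    (hdisj : ∀ i j : Fin d, i ≠ j → ∀ u v : V, ¬ (H i u v ∧ H j u v))
    (hperm : ∀ i : Fin d, ∃ σ : Equiv.Perm V, ∀ u v : V, H i u v ↔ σ u = v)
    (MH : Fin d → Matrix (Fin n) (Fin n) ℕ)
    (lV : V ≃ Fin n)  -- a labeling of the vertices of `D`
    (hMH : ∀ i x y, MH i x y = if H i (lV.symm x) (lV.symm y) then 1 else 0) :
    ∃ e : {a : V × V // D a.1 a.2} ≃ Fin d × Fin n,  -- a labeling of `V(L(D))`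
      (Matrix.of fun p q : Fin d × Fin n =>
          if (e.symm p).val.2 = (e.symm q).val.1 then (1 : ℕ) else 0) =
        (((Matrix.of fun _ _ => (1 : ℕ)) : Matrix (Fin d) (Fin d) ℕ) ⊗ₖ
            (1 : Matrix (Fin n) (Fin n) ℕ)) *
          (Matrix.reindex (Equiv.prodComm (Fin n) (Fin d)) (Equiv.prodComm (Fin n) (Fin d))
            (Matrix.blockDiagonal MH)) := by
  classical
  choose σ hσ using hperm
  have huniq : ∀ u v (i j : Fin d), H i u v → H j u v → i = j := by
    intro u v i j hi hj
    by_contra hne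
    exact hdisj i j hne u v ⟨hi, hj⟩
  have hidx : ∀ a : {a : V × V // D a.1 a.2}, ∃ i, H i a.val.1 a.val.2 := fun a =>
    (hpart a.val.1 a.val.2).mp a.prop
  choose idx hidxH using hidx
  refine ⟨{
      toFun := fun a => (idx a, lV a.val.2)
      invFun := fun p => ⟨((σ p.1).symm (lV.symm p.2), lV.symm p.2),
        (hpart _ _).mpr ⟨p.1, (hσ p.1 _ _).mpr (by simp)⟩⟩
      left_inv := ?_
      right_inv := ?_ }, ?_⟩
  · intro a
    have h1 : σ (idx a) a.val.1 = a.val.2 := (hσ _ _ _).mp (hidxH a)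
    ext
    · simp [← h1]
    · simp
  · intro p
    have hH : H p.1 ((σ p.1).symm (lV.symm p.2)) (lV.symm p.2) :=
      (hσ p.1 _ _).mpr (by simp)
    have := huniq _ _ _ _ (hidxH ⟨((σ p.1).symm (lV.symm p.2), lV.symm p.2),
      (hpart _ _).mpr ⟨p.1, hH⟩⟩) hH
    ext
    · exact congrArg Fin.val this
    · simp
  · ext ⟨a, x⟩ ⟨b, y⟩
    have hrhs : ∀ c z, ((((Matrix.of fun _ _ => (1 : ℕ)) : Matrix (Fin d) (Fin d) ℕ) ⊗ₖ
        (1 : Matrix (Fin n) (Fin n) ℕ)) *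
        (Matrix.reindex (Equiv.prodComm (Fin n) (Fin d)) (Equiv.prodComm (Fin n) (Fin d))
          (Matrix.blockDiagonal MH))) (c, z) (b, y) = MH b z y := by
      intro c z
      rw [Matrix.mul_apply]
      rw [Fintype.sum_prod_type]
      simp [Matrix.blockDiagonal_apply, Matrix.one_apply]
    rw [hrhs a x, hMH]
    simp only [Matrix.of_apply, Equiv.coe_fn_symm_mk]
    congr 1
    simp only [eq_iff_iff]
    constructor
    · intro h
      refine (hσ b _ _).mpr ?_
      rw [h]
      simp
    · intro h
      have h2 : σ b (lV.symm x) = lV.symm y := (hσ b _ _).mp h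
      rw [← h2]
      simp
end

section
/- Let D be a d-regular digraph with dicycle factorization {H_1,...,H_d}. For each j, the growth Υ_D(H_j) is isomorphic to its own line digraph: Υ_D(H_j) ≅ L(Υ_D(H_j)). -/
/-- If `H` is a dicycle factor of a `d`-regular digraph `D`, then the growth
`Υ_D(H)` is isomorphic to its own line digraph. -/
theorem growth_iso_lineDigraph_of_dicycle_factor
    {V : Type*} [Fintype V] [DecidableEq V] (D : V → V → Prop) [DecidableRel D]
    (d : ℕ)
    (hout : ∀ v : V, (Finset.univ.filter fun w => D v w).card = d)
    (hin : ∀ v : V, (Finset.univ.filter fun w => D w v).card = d)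
    (H : V → V → Prop)
    (hsub : ∀ u v : V, H u v → D u v)
    (hperm : ∃ σ : Equiv.Perm V, ∀ u v : V, H u v ↔ σ u = v) :
    ∃ e : (V ⊕ {a : V × V // D a.1 a.2 ∧ ¬ H a.1 a.2}) ≃
        {a : _ × _ // growth D H a.1 a.2},
      ∀ u v, growth D H u v ↔ (e u).val.2 = (e v).val.1 := by
  obtain ⟨σ, hσ⟩ := hperm
  refine ⟨⟨fun x => match x with
    | Sum.inl u => ⟨(Sum.inl (σ.symm u), Sum.inl u),
        Or.inl ⟨σ.symm u, u, rfl, rfl, (hσ _ _).2 (σ.apply_symm_apply u)⟩⟩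
    | Sum.inr p => ⟨(Sum.inl p.val.1, Sum.inr p),
        Or.inr ⟨p.val.1, p, rfl, rfl, rfl⟩⟩,
    fun a => a.val.2, ?_, ?_⟩, ?_⟩
  · rintro (u | p) <;> rfl
  · rintro ⟨⟨a, b⟩, hg⟩
    apply Subtype.ext
    obtain (⟨u, v, hu, hv, huv⟩ | ⟨u, p, hu, hv, hp⟩) := hg <;>
      simp only at hu hv <;> subst hu <;> subst hv
    · exact Prod.ext (congrArg Sum.inl (σ.symm_apply_eq.2 ((hσ _ _).1 huv).symm)) rfl
    · exact Prod.ext (congrArg Sum.inl hp) rfl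
  · rintro (u | p) (v | q) <;> simp only [Equiv.coe_fn_mk]
    · constructor
      · rintro (⟨u', v', hu, hv, huv⟩ | ⟨u', p, _, hv, _⟩)
        · cases hu; cases hv
          exact congrArg Sum.inl (σ.symm_apply_eq.2 ((hσ _ _).1 huv).symm).symm
        · exact absurd hv (by simp)
      · intro h
        simp only [Sum.inl.injEq] at h
        exact Or.inl ⟨u, v, rfl, rfl, (hσ _ _).2 (by rw [h, σ.apply_symm_apply])⟩
    · constructor
      · rintro (⟨u', v', _, hv, _⟩ | ⟨u', p, hu, hv, hp⟩)
        · exact absurd hv (by simp)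
        · cases hu; cases Sum.inr.inj hv
          exact congrArg Sum.inl hp.symm
      · intro h
        simp only [Sum.inl.injEq] at h
        exact Or.inr ⟨u, q, rfl, rfl, h.symm⟩
    · constructor
      · rintro (⟨u', v', hu, _, _⟩ | ⟨u', p', hu, _, _⟩) <;> exact absurd hu (by simp)
      · intro h; exact absurd h (by simp)
    · constructor
      · rintro (⟨u', v', hu, _, _⟩ | ⟨u', p', hu, _, _⟩) <;> exact absurd hu (by simp)
      · intro h; exact absurd h (by simp)
end

section
/- For any dicycle factorization {H_1, ..., H_d} of K_d^+ (the complete digraph on d vertices with loops), the adjacency matrix of the de Bruijn digraph B(d,2) is, up to simultaneous row-and-column permutation, equal to (J_d ⊗ I_d) · (M(H_1) ⊕ ... ⊕ M(H_d)). -/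
open Kronecker

/-- For any dicycle factorization `{H 1, …, H d}` of `K_d⁺` (given by permutations
`σ i` whose graphs partition all `d²` arcs), the adjacency matrix of the de Bruijn
digraph `B(d,2)` is, up to a simultaneous row-and-column permutation, equal to
`(J_d ⊗ I_d) * (M(H 1) ⊕ ⋯ ⊕ M(H d))`. -/
theorem deBruijn_two_adjacency_eq
    (d : ℕ) (σ : Fin d → Equiv.Perm (Fin d))
    (hfact : ∀ x y : Fin d, ∃! i : Fin d, σ i x = y) :
    ∃ e : (Fin d × Fin d) ≃ (Fin d × Fin d),
      (Matrix.of fun p q : Fin d × Fin d =>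
          if (e.symm p).2 = (e.symm q).1 then (1 : ℕ) else 0) =
        (((Matrix.of fun _ _ => (1 : ℕ)) : Matrix (Fin d) (Fin d) ℕ) ⊗ₖ
            (1 : Matrix (Fin d) (Fin d) ℕ)) *
          (Matrix.reindex (Equiv.prodComm (Fin d) (Fin d)) (Equiv.prodComm (Fin d) (Fin d))
            (Matrix.blockDiagonal fun i : Fin d => (σ i).permMatrix ℕ)) := by
  set f : Fin d × Fin d → Fin d × Fin d := fun p => ((σ p.1)⁻¹ p.2, p.2) with hf
  have hinj : Function.Injective f := by
    rintro ⟨a, b⟩ ⟨c, g⟩ h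
    simp only [hf, Prod.mk.injEq] at h
    obtain ⟨h1, h2⟩ := h
    subst h2
    have ha : σ a ((σ a)⁻¹ b) = b := by simp
    have hc : σ c ((σ a)⁻¹ b) = b := by rw [h1]; simp
    obtain ⟨i, hi, huniq⟩ := hfact ((σ a)⁻¹ b) b
    have := (huniq a ha).trans (huniq c hc).symm
    exact Prod.ext this rfl
  have hbij : Function.Bijective f := Finite.injective_iff_bijective.mp hinj
  refine ⟨(Equiv.ofBijective f hbij).symm, ?_⟩
  ext ⟨a, b⟩ ⟨c, g⟩
  have hL : ((Equiv.ofBijective f hbij).symm.symm (a, b)).2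
      = ((Equiv.ofBijective f hbij).symm.symm (c, g)).1
      ↔ σ c b = g := by
    simp only [Equiv.symm_symm, Equiv.ofBijective_apply, hf]
    constructor
    · intro h; rw [h]; simp
    · intro h; rw [← h]; simp
  rw [Matrix.mul_apply]
  simp only [Matrix.of_apply, Matrix.reindex_apply, Matrix.submatrix_apply,
    Matrix.kroneckerMap_apply, Equiv.prodComm_symm, Equiv.prodComm_apply, Prod.swap_prod_mk,
    Matrix.blockDiagonal_apply, Equiv.Perm.permMatrix, PEquiv.toMatrix_apply,
    Equiv.toPEquiv_apply, Option.mem_def, Option.some.injEq, Matrix.one_apply, one_mul]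
  rw [Finset.sum_eq_single (c, b)]
  · simp only [hL]
    by_cases h : σ c b = g <;> simp [h, eq_comm]
  · rintro ⟨i, x⟩ _ hne
    by_cases h1 : b = x
    · subst h1
      have : i ≠ c := fun h => hne (by rw [h])
      simp [this]
    · simp [h1]
  · intro h; exact absurd (Finset.mem_univ _) h
end
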